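/- arXiv:2412.05927 — 3 statements merged into one kernel-verified Lean document; each statement's English description precedes it below -/
import Mathlib

section
/- Let k be a field and V, W arbitrary k-vector spaces. Consider the bilinear pairing B : (V ⊗_k Hom_k(W,k)) × Hom_k(V,W) → k determined on simple tensors by B(z⊗f, ψ) = f(ψ(z)). Then B is nondegenerate in both slots: (i) if t ∈ V ⊗ Hom_k(W,k) satisfies B(t,ψ) = 0 for all ψ ∈ Hom_k(V,W), then t = 0; (ii) if ψ ∈ Hom_k(V,W) satisfies B(t,ψ) = 0 for all t ∈ V ⊗ Hom_k(W,k), then ψ = 0. -/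
open TensorProduct

/-- The composition trace pairing `B(z⊗f, ψ) = f(ψ z)` between `V ⊗ W^∨` and
`Hom(V,W)` is nondegenerate in both slots. -/
theorem stmt3 (k : Type*) [Field k] (V W : Type*) [AddCommGroup V] [Module k V]
    [AddCommGroup W] [Module k W]
    (B : (V ⊗[k] Module.Dual k W) →ₗ[k] (V →ₗ[k] W) →ₗ[k] k)
    (hB : ∀ (z : V) (f : Module.Dual k W) (ψ : V →ₗ[k] W),
      B (z ⊗ₜ[k] f) ψ = f (ψ z)) :
    (∀ t : V ⊗[k] Module.Dual k W, (∀ ψ : V →ₗ[k] W, B t ψ = 0) → t = 0) ∧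
    (∀ ψ : V →ₗ[k] W, (∀ t : V ⊗[k] Module.Dual k W, B t ψ = 0) → ψ = 0) := by
  constructor
  · intro t ht
    let b := Module.Free.chooseBasis k V
    let e := (TensorProduct.congr b.repr (LinearEquiv.refl k (Module.Dual k W))).trans
      (TensorProduct.finsuppScalarLeft k (Module.Dual k W) _)
    suffices h : e t = 0 by
      have := e.injective (by simpa using h)
      simpa using this
    ext i w
    have key : ∀ s : V ⊗[k] Module.Dual k W,
        (e s) i w = B s ((b.coord i).smulRight w) := by
      intro s
      induction s using TensorProduct.induction_on with
      | zero => simp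
      | tmul z f =>
          simp [e, hB, Module.Basis.coord, mul_comm]
      | add x y hx hy => simp [map_add, hx, hy]
    rw [key]
    exact ht _
  · intro ψ hψ
    ext v
    rw [LinearMap.zero_apply, ← Module.forall_dual_apply_eq_zero_iff k]
    intro f
    have := hψ (v ⊗ₜ f)
    rwa [hB] at this
end

section
/- Let k be a commutative ring and M₀, M₁, M₂ k-modules. For k-modules U, V write an element of the Calkin hom from U to V as a pair a = (t,φ) with t ∈ V⊗Hom(U,k) and φ ∈ Hom(U,V), and let c denote the Calkin composition c((t₂,φ₂),(t₁,φ₁)) = ((1⊗φ₁ᵀ)t₂ + (φ₂⊗1)t₁, φ₂∘φ₁). Define the trace pairing π(a,b) between a pair a from M₀ to M₁ and b from M₁ to M₀ by π((t,φ),(s,ψ)) = ev(t,ψ) + ev(s,φ), where ev(z⊗f, ψ) := f(ψ(z)) extended bilinearly. Then for a₁ from M₀ to M₁, a₂ from M₁ to M₂, and a₀ from M₂ to M₀, one has the cyclic associativity π(c(a₂,a₁), a₀) = π(a₂, c(a₁,a₀)). -/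
open TensorProduct

/-- The Calkin composition of pairs `(t, φ)`. -/
noncomputable def calkinComp {k : Type*} [CommRing k] {M₀ M₁ M₂ : Type*}
    [AddCommGroup M₀] [Module k M₀] [AddCommGroup M₁] [Module k M₁]
    [AddCommGroup M₂] [Module k M₂]
    (a₂ : (M₂ ⊗[k] Module.Dual k M₁) × (M₁ →ₗ[k] M₂))
    (a₁ : (M₁ ⊗[k] Module.Dual k M₀) × (M₀ →ₗ[k] M₁)) :
    (M₂ ⊗[k] Module.Dual k M₀) × (M₀ →ₗ[k] M₂) :=
  (LinearMap.lTensor M₂ a₁.2.dualMap a₂.1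
      + LinearMap.rTensor (Module.Dual k M₀) a₂.2 a₁.1,
    a₂.2 ∘ₗ a₁.2)

/-- `ev(z⊗f, ψ) = f (ψ z)` extended bilinearly in the tensor slot. -/
noncomputable def trEv {k : Type*} [CommRing k] {V U : Type*} [AddCommGroup V] [Module k V]
    [AddCommGroup U] [Module k U] (ψ : V →ₗ[k] U) :
    (V ⊗[k] Module.Dual k U) →ₗ[k] k :=
  TensorProduct.lift ((LinearMap.applyₗ : U →ₗ[k] Module.Dual k U →ₗ[k] k).comp ψ)

/-- The trace pairing `π((t,φ),(s,ψ)) = ev(t,ψ) + ev(s,φ)` on Calkin morphisms. -/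
noncomputable def calkinTrace {k : Type*} [CommRing k] {M N : Type*} [AddCommGroup M] [Module k M]
    [AddCommGroup N] [Module k N]
    (a : (N ⊗[k] Module.Dual k M) × (M →ₗ[k] N))
    (b : (M ⊗[k] Module.Dual k N) × (N →ₗ[k] M)) : k :=
  trEv b.2 a.1 + trEv a.2 b.1

lemma trEv_tmul {k : Type*} [CommRing k] {V U : Type*} [AddCommGroup V] [Module k V]
    [AddCommGroup U] [Module k U] (ψ : V →ₗ[k] U) (z : V) (f : Module.Dual k U) :
    trEv ψ (z ⊗ₜ[k] f) = f (ψ z) := rfl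

lemma trEv_lTensor {k : Type*} [CommRing k] {V U W : Type*} [AddCommGroup V] [Module k V]
    [AddCommGroup U] [Module k U] [AddCommGroup W] [Module k W]
    (χ : V →ₗ[k] U) (φ : U →ₗ[k] W) (t : V ⊗[k] Module.Dual k W) :
    trEv χ (LinearMap.lTensor V φ.dualMap t) = trEv (φ ∘ₗ χ) t := by
  induction t using TensorProduct.induction_on with
  | zero => simp
  | tmul z f => rfl
  | add x y hx hy => simp [map_add, hx, hy]

lemma trEv_rTensor {k : Type*} [CommRing k] {V U W : Type*} [AddCommGroup V] [Module k V]
    [AddCommGroup U] [Module k U] [AddCommGroup W] [Module k W]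
    (χ : W →ₗ[k] U) (ψ : V →ₗ[k] W) (t : V ⊗[k] Module.Dual k U) :
    trEv χ (LinearMap.rTensor (Module.Dual k U) ψ t) = trEv (χ ∘ₗ ψ) t := by
  induction t using TensorProduct.induction_on with
  | zero => simp
  | tmul z f => rfl
  | add x y hx hy => simp [map_add, hx, hy]

/-- Cyclic associativity of the trace pairing with respect to Calkin composition. -/
theorem stmt7 {k : Type*} [CommRing k] {M₀ M₁ M₂ : Type*}
    [AddCommGroup M₀] [Module k M₀] [AddCommGroup M₁] [Module k M₁]
    [AddCommGroup M₂] [Module k M₂]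
    (a₁ : (M₁ ⊗[k] Module.Dual k M₀) × (M₀ →ₗ[k] M₁))
    (a₂ : (M₂ ⊗[k] Module.Dual k M₁) × (M₁ →ₗ[k] M₂))
    (a₀ : (M₀ ⊗[k] Module.Dual k M₂) × (M₂ →ₗ[k] M₀)) :
    calkinTrace (calkinComp a₂ a₁) a₀ = calkinTrace a₂ (calkinComp a₁ a₀) := by
  simp only [calkinTrace, calkinComp, map_add, trEv_lTensor, trEv_rTensor]
  ring
end

section
/- Let k be a commutative ring and A, P, Q, R k-modules. Given families φ = (φ^r : A^{⊗r} → P)_{r≥0} and ψ = (ψ^r : A^{⊗r} → Q)_{r≥0}, define (φ⊔ψ) : A^{⊗n} → ⊕_{m≥0} P ⊗ A^{⊗m} ⊗ Q by (φ⊔ψ)(a₁,…,a_n) = Σ_{0≤i≤j≤n} φ^{n-j}(a_{j+1},…,a_n) ⊗ (a_{i+1}⊗…⊗a_j) ⊗ ψ^{i}(a₁,…,a_i). Given also a 'Hochschild chain' element γ = r ⊗ a₁ ⊗ … ⊗ a_k ∈ R ⊗ A^{⊗k}, define φ⊓γ = Σ_{i,s : i+s≤k} r ⊗ (a_{i+s+1}⊗…⊗a_k)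 ⊗ φ^{s}(a_{i+1},…,a_{i+s}) ⊗ (a₁⊗…⊗a_i), an element of ⊕ R ⊗ A^{⊗} ⊗ P ⊗ A^{⊗}, and extend ⊓ to chains with values in iterated such tensor products by inserting in the same pattern. Then the associativity identity (φ⊔ψ)⊓γ = φ⊓(ψ⊓γ) holds, as an equality of elements of ⊕ R ⊗ A^{⊗} ⊗ Q ⊗ A^{⊗} ⊗ P ⊗ A^{⊗} (after the canonical reindexing identifying the two targets). -/
/-- Generic reindexing lemma: the pure combinatorial bijection underlying the
associativity of convolution/cap products. -/
lemma stmt10_key {T : Type*} [AddCommMonoid T] (n : ℕ) (F : ℕ → ℕ → ℕ → ℕ → T) :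
    (∑ i₀ ∈ Finset.range (n + 1), ∑ s ∈ Finset.range (n - i₀ + 1),
      ∑ q ∈ Finset.range (s + 1), ∑ p ∈ Finset.range (q + 1), F i₀ s q p)
    = ∑ i₁ ∈ Finset.range (n + 1), ∑ p ∈ Finset.range (n - i₁ + 1),
        ∑ i₂ ∈ Finset.Icc (i₁ + p) n, ∑ s ∈ Finset.range (n - i₂ + 1),
          F i₁ (i₂ - i₁ + s) (i₂ - i₁) p := by
  simp only [Finset.sum_sigma']
  refine Finset.sum_nbij'
    (fun x => ⟨x.1, x.2.2.2, x.1 + x.2.2.1, x.2.1 - x.2.2.1⟩)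
    (fun y => ⟨y.1, y.2.2.1 - y.1 + y.2.2.2, y.2.2.1 - y.1, y.2.1⟩)
    ?_ ?_ ?_ ?_ ?_
  · rintro ⟨i₀, s, q, p⟩ hx
    simp only [Finset.mem_sigma, Finset.mem_range, Finset.mem_Icc] at hx ⊢
    omega
  · rintro ⟨i₁, p, i₂, s⟩ hy
    simp only [Finset.mem_sigma, Finset.mem_range, Finset.mem_Icc] at hy ⊢
    omega
  · rintro ⟨i₀, s, q, p⟩ hx
    simp only [Finset.mem_sigma, Finset.mem_range, Finset.mem_Icc] at hx
    simp only [Sigma.mk.inj_iff, heq_eq_eq, and_true, true_and]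
    omega
  · rintro ⟨i₁, p, i₂, s⟩ hy
    simp only [Finset.mem_sigma, Finset.mem_range, Finset.mem_Icc] at hy
    simp only [Sigma.mk.inj_iff, heq_eq_eq, and_true, true_and]
    omega
  · rintro ⟨i₀, s, q, p⟩ hx
    simp only [Finset.mem_sigma, Finset.mem_range, Finset.mem_Icc] at hx
    have h1 : i₀ + q - i₀ = q := by omega
    have h2 : q + (s - q) = s := by omega
    simp only [h1]
    rw [h2]

/-- Associativity `(φ⊔ψ)⊓γ = φ⊓(ψ⊓γ)` of the convolution product on Hochschild
cochains and the outer cap product on Hochschild chains, in its ungraded,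
sign-free form: both sides are the sums over all ways to split the tensor
string `a₁,…,a_n` into blocks fed to `φ` and `ψ`, assembled into a common
target `T` via `ι`; the identity is a pure reindexing of finite sums. -/
theorem stmt10 {k A P Q R T : Type*} [CommRing k]
    [AddCommGroup A] [Module k A] [AddCommGroup P] [Module k P]
    [AddCommGroup Q] [Module k Q] [AddCommGroup R] [Module k R]
    [AddCommGroup T] [Module k T]
    (ι : ∀ m₁ m₂ m₃ : ℕ,
      R → (Fin m₁ → A) → P → (Fin m₂ → A) → Q → (Fin m₃ → A) → T)
    (φ : ∀ s : ℕ, (Fin s → A) → P) (ψ : ∀ s : ℕ, (Fin s → A) → Q)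
    (r : R) (n : ℕ) (a : ℕ → A) :
    (∑ i₀ ∈ Finset.range (n + 1), ∑ s ∈ Finset.range (n - i₀ + 1),
      ∑ q ∈ Finset.range (s + 1), ∑ p ∈ Finset.range (q + 1),
        ι (n - (i₀ + s)) (q - p) i₀ r
          (fun t => a (i₀ + s + 1 + t.1))
          (φ (s - q) (fun t => a (i₀ + q + 1 + t.1)))
          (fun t => a (i₀ + p + 1 + t.1))
          (ψ p (fun t => a (i₀ + 1 + t.1)))
          (fun t => a (t.1 + 1)))
    = ∑ i₁ ∈ Finset.range (n + 1), ∑ p ∈ Finset.range (n - i₁ + 1),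
        ∑ i₂ ∈ Finset.Icc (i₁ + p) n, ∑ s ∈ Finset.range (n - i₂ + 1),
          ι (n - (i₂ + s)) (i₂ - (i₁ + p)) i₁ r
            (fun t => a (i₂ + s + 1 + t.1))
            (φ s (fun t => a (i₂ + 1 + t.1)))
            (fun t => a (i₁ + p + 1 + t.1))
            (ψ p (fun t => a (i₁ + 1 + t.1)))
            (fun t => a (t.1 + 1)) := by
  rw [stmt10_key n (fun i₀ s q p =>
    ι (n - (i₀ + s)) (q - p) i₀ r
      (fun t => a (i₀ + s + 1 + t.1))
      (φ (s - q) (fun t => a (i₀ + q + 1 + t.1)))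
      (fun t => a (i₀ + p + 1 + t.1))
      (ψ p (fun t => a (i₀ + 1 + t.1)))
      (fun t => a (t.1 + 1)))]
  refine Finset.sum_congr rfl fun i₁ hi₁ => Finset.sum_congr rfl fun p hp =>
    Finset.sum_congr rfl fun i₂ hi₂ => Finset.sum_congr rfl fun s hs => ?_
  simp only [Finset.mem_range, Finset.mem_Icc] at hi₁ hp hi₂ hs
  have h1 : i₁ + (i₂ - i₁ + s) = i₂ + s := by omega
  have h2 : i₂ - i₁ - p = i₂ - (i₁ + p) := by omega
  have h3 : i₂ - i₁ + s - (i₂ - i₁) = s := by omega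
  have h4 : i₁ + (i₂ - i₁) = i₂ := by omega
  rw [h1, h2, h3, h4]
end
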